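/- Let p be a prime, let F be the algebraic closure of the field with p elements, let G = SL₂(F), let B ≤ G be the Borel subgroup of upper triangular matrices (those g with g₂₁ = 0), and let T ≤ G be the diagonal maximal torus (those g with g₁₂ = 0 and g₂₁ = 0). Let k be a field and let V = (G/B) →₀ k be the k-vector space with basis the left coset space G/B, on which G acts by left translation of the basis vectors. Then there exist two linearly independent k-linear maps f₁, f₂ : V → k such that fᵢ(t • v) = fᵢ(v) for all t ∈ T, v ∈ V and i = 1, 2. -/

import Mathlib

/-!
The cosets `B` and `wB` of the Weyl element `w` are distinct points of `G/B` fixed by `T`: the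
first because `T ≤ B`, the second because `w` normalises `T`. Evaluation of a finitely supported
function at a `T`-fixed point is a `T`-invariant functional, and evaluations at two distinct points
are linearly independent.
-/

open Matrix

/-- The Borel subgroup of upper triangular matrices in `SL₂(R)`. -/
def upperBorel (R : Type*) [CommRing R] : Subgroup (SpecialLinearGroup (Fin 2) R) where
  carrier := {g | (g : Matrix (Fin 2) (Fin 2) R) 1 0 = 0}
  one_mem' := by simp
  mul_mem' := by
    intro a b ha hb
    have ha' : (a : Matrix (Fin 2) (Fin 2) R) 1 0 = 0 := ha
    have hb' : (b : Matrix (Fin 2) (Fin 2) R) 1 0 = 0 := hb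
    show ((a * b : SpecialLinearGroup (Fin 2) R) : Matrix (Fin 2) (Fin 2) R) 1 0 = 0
    have hm : ((a * b : SpecialLinearGroup (Fin 2) R) : Matrix (Fin 2) (Fin 2) R) = (a : Matrix (Fin 2) (Fin 2) R) * (b : Matrix (Fin 2) (Fin 2) R) :=
      Matrix.SpecialLinearGroup.coe_mul a b
    rw [hm, Matrix.mul_apply, Fin.sum_univ_two, ha', hb']; ring
  inv_mem' := by
    intro a ha
    have ha' : (a : Matrix (Fin 2) (Fin 2) R) 1 0 = 0 := ha
    show ((a⁻¹ : SpecialLinearGroup (Fin 2) R) : Matrix (Fin 2) (Fin 2) R) 1 0 = 0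
    have hi : ((a⁻¹ : SpecialLinearGroup (Fin 2) R) : Matrix (Fin 2) (Fin 2) R) = Matrix.adjugate (a : Matrix (Fin 2) (Fin 2) R) :=
      Matrix.SpecialLinearGroup.coe_inv a
    rw [hi, Matrix.adjugate_fin_two]
    simp [ha']

/-- The diagonal maximal torus in `SL₂(R)`. -/
def diagonalTorus (R : Type*) [CommRing R] : Subgroup (SpecialLinearGroup (Fin 2) R) where
  carrier := {g | (g : Matrix (Fin 2) (Fin 2) R) 0 1 = 0 ∧
    (g : Matrix (Fin 2) (Fin 2) R) 1 0 = 0}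
  one_mem' := by simp
  mul_mem' := by
    intro a b ha hb
    have ha' : (a : Matrix (Fin 2) (Fin 2) R) 0 1 = 0 ∧ (a : Matrix (Fin 2) (Fin 2) R) 1 0 = 0 := ha
    have hb' : (b : Matrix (Fin 2) (Fin 2) R) 0 1 = 0 ∧ (b : Matrix (Fin 2) (Fin 2) R) 1 0 = 0 := hb
    show ((a * b : SpecialLinearGroup (Fin 2) R) : Matrix (Fin 2) (Fin 2) R) 0 1 = 0 ∧
      ((a * b : SpecialLinearGroup (Fin 2) R) : Matrix (Fin 2) (Fin 2) R) 1 0 = 0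
    have hm : ((a * b : SpecialLinearGroup (Fin 2) R) : Matrix (Fin 2) (Fin 2) R) = (a : Matrix (Fin 2) (Fin 2) R) * (b : Matrix (Fin 2) (Fin 2) R) :=
      Matrix.SpecialLinearGroup.coe_mul a b
    rw [hm, Matrix.mul_apply, Matrix.mul_apply, Fin.sum_univ_two,
      Fin.sum_univ_two]
    constructor
    · rw [ha'.1, hb'.1]; ring
    · rw [ha'.2, hb'.2]; ring
  inv_mem' := by
    intro a ha
    have ha' : (a : Matrix (Fin 2) (Fin 2) R) 0 1 = 0 ∧ (a : Matrix (Fin 2) (Fin 2) R) 1 0 = 0 := ha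
    show ((a⁻¹ : SpecialLinearGroup (Fin 2) R) : Matrix (Fin 2) (Fin 2) R) 0 1 = 0 ∧
      ((a⁻¹ : SpecialLinearGroup (Fin 2) R) : Matrix (Fin 2) (Fin 2) R) 1 0 = 0
    have hi : ((a⁻¹ : SpecialLinearGroup (Fin 2) R) : Matrix (Fin 2) (Fin 2) R) = Matrix.adjugate (a : Matrix (Fin 2) (Fin 2) R) :=
      Matrix.SpecialLinearGroup.coe_inv a
    rw [hi, Matrix.adjugate_fin_two]
    simp [ha'.1, ha'.2]


namespace Finsupp

theorem linearIndependent_lapply_pair {α R : Type*} [CommSemiring R] {x y : α} (hxy : x ≠ y) :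
    LinearIndependent R ![(lapply x : (α →₀ R) →ₗ[R] R), lapply y] := by
  have hinj : Function.Injective ![x, y] := by
    simp [Function.Injective, Fin.forall_fin_two, hxy, hxy.symm]
  convert (Finsupp.basisSingleOne (R := R) (ι := α)).linearIndependent_coord.comp _ hinj
  ext i : 1
  fin_cases i <;> rfl

theorem mapDomain_smul_apply_of_smul_eq {G X M : Type*} [Group G] [MulAction G X]
    [AddCommMonoid M] {g : G} {x : X} (hx : g • x = x) (v : X →₀ M) :
    mapDomain (g • ·) v x = v x := by
  conv_lhs => rw [← hx]
  exact mapDomain_apply (MulAction.injective g) v x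

end Finsupp

theorem QuotientGroup.smul_mk_eq_self_iff {G : Type*} [Group G] {H : Subgroup G} {g a : G} :
    g • (a : G ⧸ H) = a ↔ a⁻¹ * g * a ∈ H := by
  show ((g * a : G) : G ⧸ H) = a ↔ _
  rw [QuotientGroup.eq, ← H.inv_mem_iff]
  group

namespace Matrix.SpecialLinearGroup

variable (R : Type*) [CommRing R]

def weylElement : SpecialLinearGroup (Fin 2) R :=
  ⟨!![0, -1; 1, 0], by simp [det_fin_two_of]⟩

variable {R}

theorem diagonalTorus_le_upperBorel : diagonalTorus R ≤ upperBorel R :=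
  fun _ ht => ht.2

theorem weylElement_inv_mul_mul_mem_diagonalTorus {t : SpecialLinearGroup (Fin 2) R}
    (ht : t ∈ diagonalTorus R) :
    (weylElement R)⁻¹ * t * weylElement R ∈ diagonalTorus R := by
  obtain ⟨h01, h10⟩ := ht
  have hw : (weylElement R : Matrix (Fin 2) (Fin 2) R) = !![0, -1; 1, 0] := rfl
  refine ⟨?_, ?_⟩ <;>
    simp [coe_inv, hw, adjugate_fin_two, mul_apply, vecMul, dotProduct, Fin.sum_univ_two, h01, h10]

theorem mk_one_ne_mk_weylElement [Nontrivial R] :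
    ((1 : SpecialLinearGroup (Fin 2) R) : SpecialLinearGroup (Fin 2) R ⧸ upperBorel R) ≠
      weylElement R := by
  rw [Ne, QuotientGroup.eq, inv_one, one_mul]
  exact one_ne_zero (α := R)

theorem smul_mk_one_of_mem_diagonalTorus {t : SpecialLinearGroup (Fin 2) R}
    (ht : t ∈ diagonalTorus R) :
    t • ((1 : SpecialLinearGroup (Fin 2) R) : SpecialLinearGroup (Fin 2) R ⧸ upperBorel R) =
      (1 : SpecialLinearGroup (Fin 2) R) :=
  QuotientGroup.smul_mk_eq_self_iff.mpr (by simpa using diagonalTorus_le_upperBorel ht)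

theorem smul_mk_weylElement_of_mem_diagonalTorus {t : SpecialLinearGroup (Fin 2) R}
    (ht : t ∈ diagonalTorus R) :
    t • (weylElement R : SpecialLinearGroup (Fin 2) R ⧸ upperBorel R) = weylElement R :=
  QuotientGroup.smul_mk_eq_self_iff.mpr
    (diagonalTorus_le_upperBorel (weylElement_inv_mul_mul_mem_diagonalTorus ht))

end Matrix.SpecialLinearGroup

/-- Remark 3.2: for `G = SL₂(𝔽̄_p)`, `B` the upper-triangular Borel, `T` the
diagonal torus, and `V = k[G/B]` (with `G` acting by left translation of basis
vectors), there exist two linearly independent `T`-invariant linear functionals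
on `V`, so `dim_k Hom_T(𝕄(tr), tr) ≥ 2`. -/
theorem stmt_10 (p : ℕ) [Fact p.Prime] (k : Type*) [Field k] :
    letI F := AlgebraicClosure (ZMod p)
    letI G := SpecialLinearGroup (Fin 2) F
    letI B := upperBorel F
    ∃ f₁ f₂ : ((G ⧸ B) →₀ k) →ₗ[k] k,
      LinearIndependent k ![f₁, f₂] ∧
      (∀ t ∈ diagonalTorus F, ∀ v : (G ⧸ B) →₀ k,
        f₁ (Finsupp.mapDomain (fun x : G ⧸ B => t • x) v) = f₁ v) ∧
      (∀ t ∈ diagonalTorus F, ∀ v : (G ⧸ B) →₀ k,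
        f₂ (Finsupp.mapDomain (fun x : G ⧸ B => t • x) v) = f₂ v) := by
  open SpecialLinearGroup Finsupp in
  exact ⟨lapply _, lapply _, linearIndependent_lapply_pair mk_one_ne_mk_weylElement,
    fun t ht => mapDomain_smul_apply_of_smul_eq (smul_mk_one_of_mem_diagonalTorus ht),
    fun t ht => mapDomain_smul_apply_of_smul_eq (smul_mk_weylElement_of_mem_diagonalTorus ht)⟩
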